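/- Define σ₁₂ : (0, ∞) → ℝ by σ₁₂(γ) = γ / (2·(3 + γ²)^{3/4}). Then σ₁₂ is strictly increasing on (0, √6), strictly decreasing on (√6, ∞), and in particular is not monotonically nondecreasing on (0, ∞). -/
import Mathlib


/-- The Cauchy shear-stress response in simple shear of the incompressible model
`W̃(I₁, I₂) = I₁^{1/4} - 3^{1/4}`. -/
noncomputable def shearStressQuarterPower (γ : ℝ) : ℝ :=
  γ / (2 * (3 + γ ^ 2) ^ ((3 : ℝ) / 4))

/-- Core polynomial inequality for the increasing regime. -/
lemma shearStress_poly_incr {x y : ℝ} (hx : 0 < x) (hy : x < y) (h6 : y < 6) :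
    x ^ 2 * (3 + y) ^ 3 < y ^ 2 * (3 + x) ^ 3 := by
  have hy0 : 0 < y := hx.trans hy
  have hP : 0 < 27 * x + 27 * y + 27 * (x * y) - x ^ 2 * y ^ 2 := by
    rcases le_or_gt (x * y) 27 with hc | hc
    · nlinarith [mul_nonneg (mul_pos hx hy0).le (sub_nonneg.mpr hc)]
    · have hy2 : 27 < y ^ 2 := by nlinarith
      nlinarith [mul_nonneg (by positivity : (0:ℝ) ≤ 729 + 27 * y ^ 2) (sub_pos.mpr hy).le,
        mul_nonneg (mul_nonneg (mul_nonneg hy0.le (by linarith : (0:ℝ) ≤ 6 - y))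
          (sq_nonneg (y + 3))) (by linarith : (0:ℝ) ≤ x * y - 27),
        mul_nonneg (mul_nonneg (mul_nonneg hy0.le (by linarith : (0:ℝ) ≤ y ^ 2 - 27))
          (by linarith : (0:ℝ) ≤ x * y - 27)) (sub_pos.mpr hy).le]
  nlinarith [mul_pos (sub_pos.mpr hy) hP]

/-- Core polynomial inequality for the decreasing regime. -/
lemma shearStress_poly_decr {x y : ℝ} (hx : 6 < x) (hy : x < y) :
    y ^ 2 * (3 + x) ^ 3 < x ^ 2 * (3 + y) ^ 3 := by
  have hx0 : (0:ℝ) < x := by linarith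
  have hy0 : (0:ℝ) < y := by linarith
  nlinarith [mul_pos (sub_pos.mpr hy) (sub_pos.mpr hx),
    mul_pos hx0 hy0, mul_pos (sub_pos.mpr hx) hy0,
    mul_pos (mul_pos (sub_pos.mpr hx) (sub_pos.mpr hy)) (mul_pos hx0 hy0),
    sq_nonneg (x - y), sq_nonneg (x * y - 36)]

lemma shearStress_lt_of_poly {a b : ℝ} (ha : 0 < a) (hb : 0 < b)
    (h : a ^ 4 * (3 + b ^ 2) ^ 3 < b ^ 4 * (3 + a ^ 2) ^ 3) :
    shearStressQuarterPower a < shearStressQuarterPower b := by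
  have h3a : (0:ℝ) < 3 + a ^ 2 := by positivity
  have h3b : (0:ℝ) < 3 + b ^ 2 := by positivity
  have hra : (0:ℝ) < (3 + a ^ 2) ^ ((3:ℝ)/4) := Real.rpow_pos_of_pos h3a _
  have hrb : (0:ℝ) < (3 + b ^ 2) ^ ((3:ℝ)/4) := Real.rpow_pos_of_pos h3b _
  have ea : ((3 + a ^ 2 : ℝ) ^ ((3:ℝ)/4)) ^ (4:ℕ) = (3 + a ^ 2) ^ (3:ℕ) := by
    rw [← Real.rpow_natCast ((3 + a ^ 2 : ℝ) ^ ((3:ℝ)/4)) 4, ← Real.rpow_mul h3a.le,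
      ← Real.rpow_natCast (3 + a ^ 2) 3]
    norm_num
  have eb : ((3 + b ^ 2 : ℝ) ^ ((3:ℝ)/4)) ^ (4:ℕ) = (3 + b ^ 2) ^ (3:ℕ) := by
    rw [← Real.rpow_natCast ((3 + b ^ 2 : ℝ) ^ ((3:ℝ)/4)) 4, ← Real.rpow_mul h3b.le,
      ← Real.rpow_natCast (3 + b ^ 2) 3]
    norm_num
  have key4 : (a * (3 + b ^ 2) ^ ((3:ℝ)/4)) ^ (4:ℕ)
      < (b * (3 + a ^ 2) ^ ((3:ℝ)/4)) ^ (4:ℕ) := by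
    rw [mul_pow, mul_pow, ea, eb]
    exact h
  have key : a * (3 + b ^ 2) ^ ((3:ℝ)/4) < b * (3 + a ^ 2) ^ ((3:ℝ)/4) :=
    lt_of_pow_lt_pow_left₀ 4 (by positivity) key4
  unfold shearStressQuarterPower
  rw [div_lt_div_iff₀ (by positivity) (by positivity)]
  nlinarith [key]

/-- `σ₁₂(γ) = γ / (2 (3 + γ²)^{3/4})` is strictly increasing on `(0, √6)`, strictly decreasing
on `(√6, ∞)`, and in particular not monotonically nondecreasing on `(0, ∞)`. -/
theorem shearStressQuarterPower_not_monotone :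
    StrictMonoOn shearStressQuarterPower (Set.Ioo 0 (Real.sqrt 6)) ∧
      StrictAntiOn shearStressQuarterPower (Set.Ioi (Real.sqrt 6)) ∧
      ∃ γ₁ γ₂ : ℝ, 0 < γ₁ ∧ γ₁ < γ₂ ∧
        shearStressQuarterPower γ₂ < shearStressQuarterPower γ₁ := by
  have hsqrt : (0:ℝ) < Real.sqrt 6 := Real.sqrt_pos.mpr (by norm_num)
  have hmono : StrictMonoOn shearStressQuarterPower (Set.Ioo 0 (Real.sqrt 6)) := by
    intro a ha b hb hab
    have ha0 : 0 < a := ha.1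
    have hb0 : 0 < b := hb.1
    have hb6 : b ^ 2 < 6 := (Real.lt_sqrt hb0.le).mp hb.2
    have hab2 : a ^ 2 < b ^ 2 := by nlinarith
    apply shearStress_lt_of_poly ha0 hb0
    have := shearStress_poly_incr (x := a ^ 2) (y := b ^ 2) (by positivity) hab2 hb6
    calc a ^ 4 * (3 + b ^ 2) ^ 3 = (a ^ 2) ^ 2 * (3 + b ^ 2) ^ 3 := by ring
      _ < (b ^ 2) ^ 2 * (3 + a ^ 2) ^ 3 := this
      _ = b ^ 4 * (3 + a ^ 2) ^ 3 := by ring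
  have hanti : StrictAntiOn shearStressQuarterPower (Set.Ioi (Real.sqrt 6)) := by
    intro a ha b hb hab
    have ha0 : 0 < a := lt_trans hsqrt ha
    have hb0 : 0 < b := lt_trans hsqrt hb
    have ha6 : 6 < a ^ 2 := (Real.sqrt_lt' ha0).mp ha
    have hab2 : a ^ 2 < b ^ 2 := by nlinarith
    apply shearStress_lt_of_poly hb0 ha0
    have := shearStress_poly_decr (x := a ^ 2) (y := b ^ 2) ha6 hab2
    calc b ^ 4 * (3 + a ^ 2) ^ 3 = (b ^ 2) ^ 2 * (3 + a ^ 2) ^ 3 := by ring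
      _ < (a ^ 2) ^ 2 * (3 + b ^ 2) ^ 3 := this
      _ = a ^ 4 * (3 + b ^ 2) ^ 3 := by ring
  refine ⟨hmono, hanti, 3, 4, by norm_num, by norm_num, ?_⟩
  have h3 : Real.sqrt 6 < 3 := (Real.sqrt_lt' (by norm_num)).mpr (by norm_num)
  exact hanti h3 (lt_trans h3 (by norm_num)) (by norm_num)
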